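/- Let k be a field of odd characteristic and g ∈ k× a non-square. Let L be the free Lie algebra on x₁,…,x₄ over k, 𝔯₂ the ideal generated by x₁₂, x₃₄, x₁₄ − x₂₃, g·x₁₃ − x₂₄, and K₂ = (L/𝔯₂)/[[L/𝔯₂, L/𝔯₂], L/𝔯₂] the quotient by the third term of the lower central series. Then no nonzero element of K₂ has centralizer of k-dimension equal to 5. -/

import Mathlib

/-!
Write `a ∈ k⁴` as the pair `(α, β) = (a₀ + a₁√g, a₂ + a₃√g)` over `k(√g)`, and let `B a a' ∈ k²`
be the coordinates of `α β' - β α'`. The two-step nilpotent Lie algebra `k⁴ × k²` with bracket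
`⁅(a, c), (a', c')⁆ = (0, B a a')` is a model of `K₂`: sending `xᵢ` to the `i`-th basis vector
of `k⁴` kills the four relators, and conversely the relators say that the images of `xᵢ`, `x₁₃`,
`x₁₄` in `K₂` obey the bracket table of the model. The centralizer of `(a, c)` is
`ker (B a) × k²`. As `g` is not a square, `k(√g)` is a field, so `B a` is onto once `a ≠ 0`:
centralizers have dimension `6` or `4`.
-/

open FreeLieAlgebra LieModule LieAlgebra

section ClassTwoQuotient

variable {R L : Type*} [CommRing R] [LieRing L] [LieAlgebra R L]

theorem lowerCentralSeries_two_eq_bot_of_lie_lie (h : ∀ x y z : L, ⁅x, ⁅y, z⁆⁆ = 0) :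
    lowerCentralSeries R L L 2 = ⊥ := by
  have hcenter : lowerCentralSeries R L L 1 ≤ center R L := by
    rw [lowerCentralSeries_succ, lowerCentralSeries_zero, LieSubmodule.lie_le_iff]
    exact fun y _ z _ x => h x y z
  rw [lowerCentralSeries_succ, ← le_bot_iff,
    ← ideal_oper_maxTrivSubmodule_eq_bot R L L ⊤]
  exact LieSubmodule.mono_lie_right ⊤ hcenter

variable (I : LieIdeal R L)

/-- `lowerCentralSeries … 2` is `⁅L, ⁅L, L⁆⁆`: the series is indexed from `0`. -/
abbrev ClassTwoQuotient := (L ⧸ I) ⧸ lowerCentralSeries R (L ⧸ I) (L ⧸ I) 2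

namespace ClassTwoQuotient

def mk : L →ₗ⁅R⁆ ClassTwoQuotient I :=
  { (lowerCentralSeries R (L ⧸ I) (L ⧸ I) 2).toSubmodule.mkQ ∘ₗ I.toSubmodule.mkQ with
    map_lie' := rfl }

theorem mk_surjective : Function.Surjective (mk I) :=
  (Submodule.mkQ_surjective _).comp (Submodule.mkQ_surjective _)

variable {I}

theorem mk_eq_zero_of_mem {a : L} (ha : a ∈ I) : mk I a = 0 := by
  show LieSubmodule.Quotient.mk (LieSubmodule.Quotient.mk a) = 0
  rw [(LieSubmodule.Quotient.mk_eq_zero' (N := I)).mpr ha]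
  rfl

theorem lie_lie (x y z : ClassTwoQuotient I) : ⁅x, ⁅y, z⁆⁆ = 0 := by
  obtain ⟨x, rfl⟩ := LieSubmodule.Quotient.surjective_mk' _ x
  obtain ⟨y, rfl⟩ := LieSubmodule.Quotient.surjective_mk' _ y
  obtain ⟨z, rfl⟩ := LieSubmodule.Quotient.surjective_mk' _ z
  rw [LieSubmodule.Quotient.mk'_apply, LieSubmodule.Quotient.mk'_apply,
    LieSubmodule.Quotient.mk'_apply, ← LieSubmodule.Quotient.mk_bracket,
    ← LieSubmodule.Quotient.mk_bracket, LieSubmodule.Quotient.mk_eq_zero',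
    lowerCentralSeries_succ, lowerCentralSeries_succ, lowerCentralSeries_zero]
  exact LieSubmodule.lie_mem_lie (LieSubmodule.mem_top x)
    (LieSubmodule.lie_mem_lie (LieSubmodule.mem_top y) (LieSubmodule.mem_top z))

variable {M : Type*} [LieRing M] [LieAlgebra R M]

def lift (φ : L →ₗ⁅R⁆ M) (hI : I ≤ φ.ker) (hM : lowerCentralSeries R M M 2 = ⊥) :
    ClassTwoQuotient I →ₗ[R] M :=
  let φI : L ⧸ I →ₗ⁅R⁆ M :=
    { I.toSubmodule.liftQ φ (by rwa [← LieHom.ker_toSubmodule]) with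
      map_lie' := by
        rintro ⟨a⟩ ⟨b⟩
        exact φ.map_lie a b }
  (lowerCentralSeries R (L ⧸ I) (L ⧸ I) 2).toSubmodule.liftQ φI <| by
    rw [← LieHom.ker_toSubmodule, LieSubmodule.toSubmodule_le_toSubmodule,
      ← LieIdeal.map_eq_bot_iff, ← le_bot_iff, ← hM]
    exact LieIdeal.map_lowerCentralSeries_le 2

theorem lift_mk (φ : L →ₗ⁅R⁆ M) (hI : I ≤ φ.ker) (hM : lowerCentralSeries R M M 2 = ⊥)
    (a : L) :
    lift φ hI hM (mk I a) = φ a :=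
  rfl

end ClassTwoQuotient

end ClassTwoQuotient

section TwoStep

variable {R V W : Type*} [CommRing R] [AddCommGroup V] [Module R V] [AddCommGroup W] [Module R W]

/-- `V × W` with the bracket `⁅(v, w), (v', w')⁆ = (0, B v v')`. -/
def TwoStep (_B : V →ₗ[R] V →ₗ[R] W) : Type _ := V × W

namespace TwoStep

variable (B : V →ₗ[R] V →ₗ[R] W)

instance : AddCommGroup (TwoStep B) := inferInstanceAs (AddCommGroup (V × W))
instance : Module R (TwoStep B) := inferInstanceAs (Module R (V × W))

instance [Module.Finite R V] [Module.Finite R W] : Module.Finite R (TwoStep B) :=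
  inferInstanceAs (Module.Finite R (V × W))

theorem finrank_eq [StrongRankCondition R] [Module.Free R V] [Module.Free R W] [Module.Finite R V]
    [Module.Finite R W] : Module.finrank R (TwoStep B) = Module.finrank R V + Module.finrank R W :=
  Module.finrank_prod

def fst : TwoStep B →ₗ[R] V := LinearMap.fst R V W
def snd : TwoStep B →ₗ[R] W := LinearMap.snd R V W
def inl : V →ₗ[R] TwoStep B := LinearMap.inl R V W
def inr : W →ₗ[R] TwoStep B := LinearMap.inr R V W

variable {B}

@[simp] theorem fst_inl (v : V) : fst B (inl B v) = v := rfl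
@[simp] theorem fst_inr (w : W) : fst B (inr B w) = 0 := rfl
@[simp] theorem snd_inl (v : V) : snd B (inl B v) = 0 := rfl
@[simp] theorem snd_inr (w : W) : snd B (inr B w) = w := rfl

theorem inr_injective : Function.Injective (inr B) := LinearMap.inr_injective

theorem linearMap_ext {M : Type*} [AddCommGroup M] [Module R M] {f f' : TwoStep B →ₗ[R] M}
    (hl : f ∘ₗ inl B = f' ∘ₗ inl B) (hr : f ∘ₗ inr B = f' ∘ₗ inr B) : f = f' :=
  LinearMap.prod_ext hl hr

variable [hB : Fact B.IsAlt]

instance : LieRing (TwoStep B) where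
  bracket x y := inr B (B (fst B x) (fst B y))
  add_lie x y z := by simp only [map_add, LinearMap.add_apply]
  lie_add x y z := by simp only [map_add]
  lie_self x := by simp only [hB.out.self_eq_zero, map_zero]
  leibniz_lie x y z := by simp only [fst_inr, map_zero, LinearMap.zero_apply, add_zero]

theorem lie_def (x y : TwoStep B) : ⁅x, y⁆ = inr B (B (fst B x) (fst B y)) := rfl

instance : LieAlgebra R (TwoStep B) where
  lie_smul t x y := by simp only [lie_def, map_smul]

theorem lie_lie (x y z : TwoStep B) : ⁅x, ⁅y, z⁆⁆ = 0 := by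
  simp only [lie_def, fst_inr, map_zero]

theorem lowerCentralSeries_two_eq_bot : lowerCentralSeries R (TwoStep B) (TwoStep B) 2 = ⊥ :=
  lowerCentralSeries_two_eq_bot_of_lie_lie lie_lie

theorem ker_ad (x : TwoStep B) :
    LinearMap.ker (ad R (TwoStep B) x) = LinearMap.ker (B (fst B x) ∘ₗ fst B) := by
  ext y
  simp only [LinearMap.mem_ker, ad_apply, lie_def, LinearMap.comp_apply]
  exact (inr_injective.eq_iff' (map_zero _))

variable {K : Type*} [LieRing K] [LieAlgebra R K] (f : V →ₗ[R] K) (h : W →ₗ[R] K)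
  (h_central : ∀ (x : K) w, ⁅x, h w⁆ = 0) (hf : ∀ v v', ⁅f v, f v'⁆ = h (B v v'))

def lift : TwoStep B →ₗ⁅R⁆ K :=
  { f ∘ₗ fst B + h ∘ₗ snd B with
    map_lie' := fun {x y} => by
      have h_central' : ∀ (x : K) w, ⁅h w, x⁆ = 0 := fun x w => by
        rw [← lie_skew, h_central, neg_zero]
      simp [lie_def, hf, h_central, h_central'] }

@[simp] theorem lift_inl (v : V) : lift f h h_central hf (inl B v) = f v := by
  change (f ∘ₗ fst B + h ∘ₗ snd B) (inl B v) = f v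
  simp

@[simp] theorem lift_inr (w : W) : lift f h h_central hf (inr B w) = h w := by
  change (f ∘ₗ fst B + h ∘ₗ snd B) (inr B w) = h w
  simp

end TwoStep
end TwoStep

theorem LieEquiv.finrank_ker_ad_apply {R L L' : Type*} [CommRing R] [LieRing L] [LieAlgebra R L]
    [LieRing L'] [LieAlgebra R L'] (e : L ≃ₗ⁅R⁆ L') (x : L) :
    Module.finrank R (LinearMap.ker (ad R L' (e x))) =
      Module.finrank R (LinearMap.ker (ad R L x)) := by
  rw [← conj_ad_apply, LinearEquiv.conj_apply, LinearMap.ker_comp, LinearEquiv.ker_comp,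
    ← Submodule.map_equiv_eq_comap_symm, LinearEquiv.finrank_map_eq]

section Model

variable {k : Type*} [Field k]

def relForm (g : k) : (Fin 4 → k) →ₗ[k] (Fin 4 → k) →ₗ[k] (Fin 2 → k) :=
  LinearMap.mk₂ k (fun a b => ![a 0 * b 2 - a 2 * b 0 + g * (a 1 * b 3 - a 3 * b 1),
      a 0 * b 3 - a 3 * b 0 + (a 1 * b 2 - a 2 * b 1)])
    (fun _ _ _ => by ext i; fin_cases i <;> simp <;> ring)
    (fun _ _ _ => by ext i; fin_cases i <;> simp <;> ring)
    (fun _ _ _ => by ext i; fin_cases i <;> simp <;> ring)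
    (fun _ _ _ => by ext i; fin_cases i <;> simp <;> ring)

theorem relForm_apply (g : k) (a b : Fin 4 → k) : relForm g a b =
    ![a 0 * b 2 - a 2 * b 0 + g * (a 1 * b 3 - a 3 * b 1),
      a 0 * b 3 - a 3 * b 0 + (a 1 * b 2 - a 2 * b 1)] :=
  rfl

instance (g : k) : Fact (relForm g).IsAlt :=
  ⟨fun a => by ext i; fin_cases i <;> simp [relForm] <;> ring⟩

theorem sq_sub_mul_sq_ne_zero {g : k} (hns : ∀ x : k, x ^ 2 ≠ g) {p q : k}
    (h : p ≠ 0 ∨ q ≠ 0) :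
    p ^ 2 - g * q ^ 2 ≠ 0 := by
  intro hpq
  rcases eq_or_ne q 0 with rfl | hq
  · simp_all
  · exact hns (p / q) (by field_simp; linear_combination hpq)

theorem relForm_surjective {g : k} (hns : ∀ x : k, x ^ 2 ≠ g) {a : Fin 4 → k} (ha : a ≠ 0) :
    Function.Surjective (relForm g a) := by
  intro c
  by_cases h01 : a 0 = 0 ∧ a 1 = 0
  · have h23 : a 2 ≠ 0 ∨ a 3 ≠ 0 := by
      by_contra! h23
      exact ha (funext fun i => by fin_cases i <;> simp [h01, h23])
    -- the preimage is `(-c / β, 0)`, where `1 / β = (a₂ - a₃√g) d`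
    obtain ⟨d, hd⟩ : ∃ d, (a 2 ^ 2 - g * a 3 ^ 2) * d = 1 :=
      ⟨_, mul_inv_cancel₀ (sq_sub_mul_sq_ne_zero hns h23)⟩
    refine ⟨![-(a 2 * c 0 - g * a 3 * c 1) * d, -(a 2 * c 1 - a 3 * c 0) * d, 0, 0], ?_⟩
    refine funext_iff.mpr (Fin.forall_fin_two.mpr ⟨?_, ?_⟩) <;>
      simp only [relForm_apply, h01, Matrix.cons_val, Matrix.cons_val_zero, Matrix.cons_val_one]
    · linear_combination c 0 * hd
    · linear_combination c 1 * hd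
  · -- the preimage is `(0, c / α)`, where `1 / α = (a₀ - a₁√g) d`
    obtain ⟨d, hd⟩ : ∃ d, (a 0 ^ 2 - g * a 1 ^ 2) * d = 1 :=
      ⟨_, mul_inv_cancel₀ (sq_sub_mul_sq_ne_zero hns (not_and_or.mp h01))⟩
    refine ⟨![0, 0, (a 0 * c 0 - g * a 1 * c 1) * d, (a 0 * c 1 - a 1 * c 0) * d], ?_⟩
    refine funext_iff.mpr (Fin.forall_fin_two.mpr ⟨?_, ?_⟩) <;>
      simp only [relForm_apply, Matrix.cons_val, Matrix.cons_val_zero, Matrix.cons_val_one]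
    · linear_combination c 0 * hd
    · linear_combination c 1 * hd

theorem finrank_ker_ad_ne_five {g : k} (hns : ∀ x : k, x ^ 2 ≠ g) (x : TwoStep (relForm g)) :
    Module.finrank k (LinearMap.ker (ad k (TwoStep (relForm g)) x)) ≠ 5 := by
  have hdim : Module.finrank k (TwoStep (relForm g)) = 6 := by simp [TwoStep.finrank_eq]
  rw [TwoStep.ker_ad]
  set p := TwoStep.fst (relForm g)
  by_cases ha : p x = 0
  · rw [ha, map_zero, LinearMap.zero_comp, LinearMap.ker_zero, finrank_top, hdim]
    decide
  · have hsurj : Function.Surjective (relForm g (p x) ∘ₗ p) :=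
      (relForm_surjective hns ha).comp LinearMap.fst_surjective
    have := LinearMap.finrank_range_add_finrank_ker (relForm g (p x) ∘ₗ p)
    rw [LinearMap.range_eq_top.mpr hsurj, finrank_top, Module.finrank_fin_fun, hdim] at this
    omega

end Model

section Presentation

variable {k : Type*} [Field k]

noncomputable def relators (g : k) : Set (FreeLieAlgebra k (Fin 4)) :=
  let x : Fin 4 → FreeLieAlgebra k (Fin 4) := of k
  {⁅x 0, x 1⁆, ⁅x 2, x 3⁆, ⁅x 0, x 3⁆ - ⁅x 1, x 2⁆, g • ⁅x 0, x 2⁆ - ⁅x 1, x 3⁆}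

noncomputable def relIdeal (g : k) : LieIdeal k (FreeLieAlgebra k (Fin 4)) :=
  LieSubmodule.lieSpan k _ (relators g)

noncomputable def toModel (g : k) : FreeLieAlgebra k (Fin 4) →ₗ⁅k⁆ TwoStep (relForm g) :=
  FreeLieAlgebra.lift k fun i => TwoStep.inl _ (Pi.single i 1)

theorem toModel_of (g : k) (i : Fin 4) : toModel g (of k i) = TwoStep.inl _ (Pi.single i 1) :=
  lift_of_apply _ i

theorem toModel_lie_of (g : k) (i j : Fin 4) :
    toModel g ⁅of k i, of k j⁆ = TwoStep.inr _ (relForm g (Pi.single i 1) (Pi.single j 1)) := by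
  rw [LieHom.map_lie, toModel_of, toModel_of, TwoStep.lie_def, TwoStep.fst_inl, TwoStep.fst_inl]

theorem relIdeal_le_ker_toModel (g : k) : relIdeal g ≤ (toModel g).ker := by
  rw [relIdeal, relators, LieSubmodule.lieSpan_le]
  rintro _ (rfl | rfl | rfl | rfl) <;>
    simp only [SetLike.mem_coe, LieHom.mem_ker, map_sub, map_smul, toModel_lie_of] <;>
    simp [relForm_apply, ← map_smul, ← Matrix.zero_empty, Matrix.cons_zero_zero]

noncomputable def gen (g : k) (i : Fin 4) : ClassTwoQuotient (relIdeal g) :=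
  ClassTwoQuotient.mk _ (of k i)

noncomputable def centerMap (g : k) : (Fin 2 → k) →ₗ[k] ClassTwoQuotient (relIdeal g) :=
  Fintype.linearCombination k ![⁅gen g 0, gen g 2⁆, ⁅gen g 0, gen g 3⁆]

theorem mk_relator {g : k} {a : FreeLieAlgebra k (Fin 4)} (ha : a ∈ relators g) :
    ClassTwoQuotient.mk (relIdeal g) a = 0 :=
  ClassTwoQuotient.mk_eq_zero_of_mem (LieSubmodule.subset_lieSpan ha)

theorem lie_gen (g : k) (i j : Fin 4) :
    ⁅gen g i, gen g j⁆ = centerMap g (relForm g (Pi.single i 1) (Pi.single j 1)) := by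
  have h01 : ⁅gen g 0, gen g 1⁆ = 0 := by
    simp only [gen, ← LieHom.map_lie]; exact mk_relator (by simp [relators])
  have h23 : ⁅gen g 2, gen g 3⁆ = 0 := by
    simp only [gen, ← LieHom.map_lie]; exact mk_relator (by simp [relators])
  have h12 : ⁅gen g 1, gen g 2⁆ = ⁅gen g 0, gen g 3⁆ := by
    rw [eq_comm, ← sub_eq_zero]
    simp only [gen, ← LieHom.map_lie, ← map_sub]
    exact mk_relator (by simp [relators])
  have h13 : ⁅gen g 1, gen g 3⁆ = g • ⁅gen g 0, gen g 2⁆ := by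
    rw [eq_comm, ← sub_eq_zero]
    simp only [gen, ← LieHom.map_lie, ← map_smul, ← map_sub]
    exact mk_relator (by simp [relators])
  wlog hij : i ≤ j generalizing i j
  · rw [← lie_skew, this j i (le_of_not_ge hij), ← map_neg, (Fact.out : (relForm g).IsAlt).neg]
  revert hij
  fin_cases i <;> fin_cases j <;>
    simp [centerMap, relForm_apply, Fintype.linearCombination_apply, h01, h23, h12, h13]

theorem lie_linearCombination_gen (g : k) (v v' : Fin 4 → k) :
    ⁅Fintype.linearCombination k (gen g) v, Fintype.linearCombination k (gen g) v'⁆ =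
      centerMap g (relForm g v v') := by
  let f := Fintype.linearCombination k (gen g)
  have h := LinearMap.ext_basis (Pi.basisFun k (Fin 4)) (Pi.basisFun k (Fin 4))
    (B := (ad k (ClassTwoQuotient (relIdeal g)) : _ →ₗ[k] Module.End k _).compl₁₂ f f)
    (B' := (relForm g).compr₂ (centerMap g)) (fun i j => by simpa [f] using lie_gen g i j)
  simpa using LinearMap.congr_fun₂ h v v'

theorem lie_centerMap (g : k) (x : ClassTwoQuotient (relIdeal g)) (w : Fin 2 → k) :
    ⁅x, centerMap g w⁆ = 0 := by
  rw [← ad_apply k]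
  simp [centerMap, Fintype.linearCombination_apply, ClassTwoQuotient.lie_lie]

noncomputable def fromModel (g : k) :
    TwoStep (relForm g) →ₗ⁅k⁆ ClassTwoQuotient (relIdeal g) :=
  TwoStep.lift _ (centerMap g) (lie_centerMap g) (lie_linearCombination_gen g)

theorem fromModel_comp_toModel (g : k) :
    (fromModel g).comp (toModel g) = ClassTwoQuotient.mk (relIdeal g) :=
  FreeLieAlgebra.hom_ext fun i => by
    simp [fromModel, toModel_of, Fintype.linearCombination_apply, Pi.single_apply, gen]

noncomputable def quotToModel (g : k) :
    ClassTwoQuotient (relIdeal g) →ₗ[k] TwoStep (relForm g) :=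
  ClassTwoQuotient.lift (toModel g) (relIdeal_le_ker_toModel g)
    TwoStep.lowerCentralSeries_two_eq_bot

theorem quotToModel_mk (g : k) (a : FreeLieAlgebra k (Fin 4)) :
    quotToModel g (ClassTwoQuotient.mk _ a) = toModel g a :=
  ClassTwoQuotient.lift_mk _ _ _ a

theorem quotToModel_comp_fromModel (g : k) :
    quotToModel g ∘ₗ (fromModel g : _ →ₗ[k] _) = LinearMap.id := by
  apply TwoStep.linearMap_ext <;> refine LinearMap.pi_ext' fun i => LinearMap.ext_ring ?_
  · simp [fromModel, Fintype.linearCombination_apply, Pi.single_apply, gen, quotToModel_mk,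
      toModel_of]
  · fin_cases i <;>
      simp [fromModel, centerMap, Fintype.linearCombination_apply, gen, ← LieHom.map_lie,
        quotToModel_mk, toModel_lie_of, relForm_apply, TwoStep.inr_injective.eq_iff, funext_iff,
        Fin.forall_fin_two]

noncomputable def modelEquiv (g : k) :
    TwoStep (relForm g) ≃ₗ⁅k⁆ ClassTwoQuotient (relIdeal g) :=
  { fromModel g with
    invFun := quotToModel g
    left_inv := LinearMap.congr_fun (quotToModel_comp_fromModel g)
    right_inv := by
      intro q
      obtain ⟨a, rfl⟩ := ClassTwoQuotient.mk_surjective _ q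
      rw [quotToModel_mk, ← fromModel_comp_toModel]
      rfl }

end Presentation

theorem no_five_dimensional_centralizer
    {k : Type*} [Field k]
    (g : k) (hns : ∀ x : k, x ^ 2 ≠ g) :
    let L := FreeLieAlgebra k (Fin 4)
    let x : Fin 4 → L := FreeLieAlgebra.of k
    let r2 : LieIdeal k L := LieSubmodule.lieSpan k L
      {⁅x 0, x 1⁆, ⁅x 2, x 3⁆, ⁅x 0, x 3⁆ - ⁅x 1, x 2⁆, g • ⁅x 0, x 2⁆ - ⁅x 1, x 3⁆}
    ∀ v : (L ⧸ r2) ⧸ LieModule.lowerCentralSeries k (L ⧸ r2) (L ⧸ r2) 2, v ≠ 0 →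
      Module.finrank k
        (LinearMap.ker (LieAlgebra.ad k ((L ⧸ r2) ⧸ LieModule.lowerCentralSeries k (L ⧸ r2) (L ⧸ r2) 2) v)) ≠ 5 := by
  intro L x r2 v _
  obtain ⟨m, rfl⟩ := (modelEquiv g).surjective v
  exact ((modelEquiv g).finrank_ker_ad_apply m).trans_ne (finrank_ker_ad_ne_five hns m)
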